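/- Type safety for λ_op: if c is a closed computation well-typed with the empty effect set, i.e. ⊢ c : T ! ∅, then either the evaluation of ⟨c; [-]⟩ diverges (admits an infinite reduction sequence), or ⟨c; [-]⟩ →* ⟨return v; [-]⟩ for some value v. -/
import Mathlib


/- A formalisation of λ_op: a fine-grained call-by-value calculus with deep
effect handlers and multi-shot continuations, in de Bruijn style. -/

namespace EffLang

abbrev OpName := String
abbrev Eff := Set OpName

/-- Value types of λ_op. -/
inductive VTy : Type
  | nat  : VTy
  | fn   : VTy → Eff → VTy → VTy    -- S →Δ T
  | cont : VTy → Eff → VTy → VTy    -- S ⇒Δ T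

/-- An effect signature Σ, assigning argument and result types to operations. -/
structure Sig where
  arg : OpName → VTy
  res : OpName → VTy

mutual
  /-- Values. -/
  inductive Val : Type
    | var  : ℕ → Val
    | nat  : ℕ → Val
    | lam  : Comp → Val
    | kont : Comp → Val
  /-- Computations. -/
  inductive Comp : Type
    | app    : Val → Val → Comp
    | ret    : Val → Comp
    | seq    : Comp → Comp → Comp            -- do x ← c₁ in c₂
    | op     : OpName → Val → Comp
    | handle : Comp → Handler → Comp
    | resume : Val → Val → Comp              -- continue v₁ v₂
  /-- Handlers. -/
  inductive Handler : Type
    | retH : Comp → Handler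
    | opH  : Handler → OpName → Comp → Handler
end

def liftR (f : ℕ → ℕ) : ℕ → ℕ
  | 0 => 0
  | n + 1 => f n + 1

mutual
  def Val.rename : Val → (ℕ → ℕ) → Val
    | .var n, f => .var (f n)
    | .nat m, _ => .nat m
    | .lam c, f => .lam (c.rename (liftR f))
    | .kont c, f => .kont (c.rename (liftR f))
  def Comp.rename : Comp → (ℕ → ℕ) → Comp
    | .app v₁ v₂, f => .app (v₁.rename f) (v₂.rename f)
    | .ret v, f => .ret (v.rename f)
    | .seq c₁ c₂, f => .seq (c₁.rename f) (c₂.rename (liftR f))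
    | .op o v, f => .op o (v.rename f)
    | .handle c h, f => .handle (c.rename f) (h.rename f)
    | .resume v₁ v₂, f => .resume (v₁.rename f) (v₂.rename f)
  def Handler.rename : Handler → (ℕ → ℕ) → Handler
    | .retH c, f => .retH (c.rename (liftR f))
    | .opH h o c, f => .opH (h.rename f) o (c.rename (liftR (liftR f)))
end

def liftS (σ : ℕ → Val) : ℕ → Val
  | 0 => .var 0
  | n + 1 => (σ n).rename Nat.succ

mutual
  def Val.subst : Val → (ℕ → Val) → Val
    | .var n, σ => σ n
    | .nat m, _ => .nat m
    | .lam c, σ => .lam (c.subst (liftS σ))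
    | .kont c, σ => .kont (c.subst (liftS σ))
  def Comp.subst : Comp → (ℕ → Val) → Comp
    | .app v₁ v₂, σ => .app (v₁.subst σ) (v₂.subst σ)
    | .ret v, σ => .ret (v.subst σ)
    | .seq c₁ c₂, σ => .seq (c₁.subst σ) (c₂.subst (liftS σ))
    | .op o v, σ => .op o (v.subst σ)
    | .handle c h, σ => .handle (c.subst σ) (h.subst σ)
    | .resume v₁ v₂, σ => .resume (v₁.subst σ) (v₂.subst σ)
  def Handler.subst : Handler → (ℕ → Val) → Handler
    | .retH c, σ => .retH (c.subst (liftS σ))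
    | .opH h o c, σ => .opH (h.subst σ) o (c.subst (liftS (liftS σ)))
end

/-- Substituting a single value for the topmost de Bruijn variable. -/
def Comp.subst1 (c : Comp) (v : Val) : Comp :=
  c.subst fun n => match n with | 0 => v | n + 1 => .var n

/-- Substituting for the two topmost de Bruijn variables
(index 0 is the continuation `k`, index 1 the argument `x`). -/
def Comp.subst2 (c : Comp) (vk vx : Val) : Comp :=
  c.subst fun n => match n with | 0 => vk | 1 => vx | n + 2 => .var n

/-- The operations handled by a handler. -/
def Handler.dom : Handler → Eff
  | .retH _ => ∅
  | .opH h o _ => insert o h.dom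

/-- The return clause of a handler. -/
def Handler.retClause : Handler → Comp
  | .retH c => c
  | .opH h _ _ => h.retClause

/-- The clause of a handler for an operation, if any. -/
def Handler.lookup : Handler → OpName → Option Comp
  | .retH _, _ => none
  | .opH h o c, o' => if o = o' then some c else h.lookup o'

abbrev TCtx := List VTy

mutual
  /-- Typing of values: `Γ ⊢ v : T`. -/
  inductive ValTy : Sig → TCtx → Val → VTy → Prop
    | var {Sg : Sig} {Γ : TCtx} {n : ℕ} {T : VTy} :
        Γ[n]? = some T → ValTy Sg Γ (.var n) T
    | nat {Sg : Sig} {Γ : TCtx} {m : ℕ} : ValTy Sg Γ (.nat m) .nat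
    | lam {Sg : Sig} {Γ : TCtx} {S T : VTy} {Δ : Eff} {c : Comp} :
        CompTy Sg (S :: Γ) c T Δ → ValTy Sg Γ (.lam c) (.fn S Δ T)
    | kont {Sg : Sig} {Γ : TCtx} {S T : VTy} {Δ : Eff} {c : Comp} :
        CompTy Sg (S :: Γ) c T Δ → ValTy Sg Γ (.kont c) (.cont S Δ T)
  /-- Typing of computations: `Γ ⊢ c : T ! Δ`. -/
  inductive CompTy : Sig → TCtx → Comp → VTy → Eff → Prop
    | app {Sg : Sig} {Γ : TCtx} {S T : VTy} {Δ : Eff} {v₁ v₂ : Val} :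
        ValTy Sg Γ v₁ (.fn S Δ T) → ValTy Sg Γ v₂ S → CompTy Sg Γ (.app v₁ v₂) T Δ
    | resume {Sg : Sig} {Γ : TCtx} {S T : VTy} {Δ : Eff} {v₁ v₂ : Val} :
        ValTy Sg Γ v₁ (.cont S Δ T) → ValTy Sg Γ v₂ S → CompTy Sg Γ (.resume v₁ v₂) T Δ
    | ret {Sg : Sig} {Γ : TCtx} {T : VTy} {Δ : Eff} {v : Val} :
        ValTy Sg Γ v T → CompTy Sg Γ (.ret v) T Δ
    | seq {Sg : Sig} {Γ : TCtx} {S T : VTy} {Δ : Eff} {c₁ c₂ : Comp} :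
        CompTy Sg Γ c₁ S Δ → CompTy Sg (S :: Γ) c₂ T Δ → CompTy Sg Γ (.seq c₁ c₂) T Δ
    | op {Sg : Sig} {Γ : TCtx} {Δ : Eff} {o : OpName} {v : Val} :
        ValTy Sg Γ v (Sg.arg o) → o ∈ Δ → CompTy Sg Γ (.op o v) (Sg.res o) Δ
    | handle {Sg : Sig} {Γ : TCtx} {S T : VTy} {Δ₁ Δ₂ : Eff} {c : Comp} {h : Handler} :
        CompTy Sg Γ c S Δ₁ → HandTy Sg Γ h S Δ₁ T Δ₂ →
        (∀ o ∈ Δ₁, o ∉ Δ₂ → o ∈ h.dom) →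
        CompTy Sg Γ (.handle c h) T Δ₂
  /-- Typing of handlers: `Γ ⊢ h : S ! Δ₁ ⇒ T ! Δ₂`. -/
  inductive HandTy : Sig → TCtx → Handler → VTy → Eff → VTy → Eff → Prop
    | retH {Sg : Sig} {Γ : TCtx} {S T : VTy} {Δ₁ Δ₂ : Eff} {c : Comp} :
        CompTy Sg (S :: Γ) c T Δ₂ → HandTy Sg Γ (.retH c) S Δ₁ T Δ₂
    | opH {Sg : Sig} {Γ : TCtx} {S T : VTy} {Δ₁ Δ₂ : Eff} {o : OpName} {h : Handler} {c : Comp} :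
        HandTy Sg Γ h S Δ₁ T Δ₂ →
        CompTy Sg (VTy.cont (Sg.res o) Δ₂ T :: Sg.arg o :: Γ) c T Δ₂ →
        Δ₁ ⊆ Δ₂ ∪ {o} →
        o ∉ h.dom →
        HandTy Sg Γ (.opH h o c) S Δ₁ T Δ₂
end

/-- Evaluation frames. -/
inductive Frame : Type
  | seqF    : Comp → Frame            -- do x ← [-] in c₂
  | handleF : Handler → Frame         -- handle [-] with h

/-- Evaluation contexts, represented as a stack of frames (head innermost). -/
abbrev EvalCtx := List Frame

def plugF : Frame → Comp → Comp
  | .seqF c₂, c => .seq c c₂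
  | .handleF h, c => .handle c h

/-- Plugging a computation into an evaluation context: `E[c]`. -/
def plug : EvalCtx → Comp → Comp
  | [], c => c
  | F :: E, c => plug E (plugF F c)

/-- The operations handled by (handler frames in) an evaluation context. -/
def handled : EvalCtx → Eff
  | [] => ∅
  | .seqF _ :: E => handled E
  | .handleF h :: E => handled E ∪ h.dom

/-- Configurations `⟨c; E⟩`. -/
abbrev Config := Comp × EvalCtx

/-- The small-step operational semantics of λ_op on configurations. -/
inductive Step : Config → Config → Prop
  | app {c : Comp} {v : Val} {E : EvalCtx} :
      Step (.app (.lam c) v, E) (c.subst1 v, E)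
  | seq {c : Comp} {v : Val} {E : EvalCtx} :
      Step (.seq (.ret v) c, E) (c.subst1 v, E)
  | hdl {h : Handler} {v : Val} {E : EvalCtx} :
      Step (.handle (.ret v) h, E) (h.retClause.subst1 v, E)
  | push (F : Frame) (c : Comp) (E : EvalCtx) :
      Step (plugF F c, E) (c, F :: E)
  | pop (F : Frame) (v : Val) (E : EvalCtx) :
      Step (.ret v, F :: E) (plugF F (.ret v), E)
  | op {h : Handler} {o : OpName} {v : Val} {c : Comp} (E₁ E₂ : EvalCtx) :
      h.lookup o = some c →
      o ∉ handled E₂ →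
      Step (.op o v, E₂ ++ .handleF h :: E₁)
           (c.subst2 (.kont (.handle (plug E₂ (.ret (.var 0))) h)) v, E₁)
  | resume {c : Comp} {v : Val} {E : EvalCtx} :
      Step (.resume (.kont c) v, E) (c.subst1 v, E)

/-- Iterated reduction. -/
abbrev Steps : Config → Config → Prop := Relation.ReflTransGen Step

/-- Divergence: an infinite reduction sequence from a configuration. -/
def Diverges (k : Config) : Prop :=
  ∃ f : ℕ → Config, f 0 = k ∧ ∀ n, Step (f n) (f (n + 1))

end EffLang

namespace EffLang

/-! ### Auxiliary lemmas for type safety -/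

theorem dom_rename : ∀ (h : Handler) (f : ℕ → ℕ), (h.rename f).dom = h.dom
  | .retH c, f => by simp [Handler.rename, Handler.dom]
  | .opH h o c, f => by simp [Handler.rename, Handler.dom, dom_rename h f]

theorem dom_subst : ∀ (h : Handler) (σ : ℕ → Val), (h.subst σ).dom = h.dom
  | .retH c, σ => by simp [Handler.subst, Handler.dom]
  | .opH h o c, σ => by simp [Handler.subst, Handler.dom, dom_subst h σ]

theorem cons_ok {Γ Γ' : TCtx} {S : VTy}
    (hf : ∀ (n : ℕ) T', Γ[n]? = some T' → Γ'[n]? = some T') :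
    ∀ (n : ℕ) T', (S :: Γ)[n]? = some T' → (S :: Γ')[n]? = some T' := by
  intro n T' h
  cases n with
  | zero => simpa using h
  | succ n => simpa using hf n T' (by simpa using h)

theorem liftR_ok {Γ Γ' : TCtx} {f : ℕ → ℕ} {S : VTy}
    (hf : ∀ n T', Γ[n]? = some T' → Γ'[f n]? = some T') :
    ∀ n T', (S :: Γ)[n]? = some T' → (S :: Γ')[liftR f n]? = some T' := by
  intro n T' h
  cases n with
  | zero => simp only [liftR]; simpa using h
  | succ n => simp only [liftR]; simpa using hf n T' (by simpa using h)

mutual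
theorem renameTyV : ∀ (v : Val) {Sg : Sig} {Γ Γ' : TCtx} {T : VTy} (f : ℕ → ℕ),
    ValTy Sg Γ v T → (∀ n T', Γ[n]? = some T' → Γ'[f n]? = some T') →
    ValTy Sg Γ' (v.rename f) T
  | .var n, _, _, _, _, f, h, hf => by
      cases h with | var hn => exact .var (hf _ _ hn)
  | .nat m, _, _, _, _, f, h, hf => by
      cases h; exact .nat
  | .lam c, _, _, _, _, f, h, hf => by
      cases h with | lam hc =>
        simp only [Val.rename]
        exact .lam (renameTyC c (liftR f) hc (liftR_ok hf))
  | .kont c, _, _, _, _, f, h, hf => by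
      cases h with | kont hc =>
        simp only [Val.rename]
        exact .kont (renameTyC c (liftR f) hc (liftR_ok hf))

theorem renameTyC : ∀ (c : Comp) {Sg : Sig} {Γ Γ' : TCtx} {T : VTy} {Δ : Eff} (f : ℕ → ℕ),
    CompTy Sg Γ c T Δ → (∀ n T', Γ[n]? = some T' → Γ'[f n]? = some T') →
    CompTy Sg Γ' (c.rename f) T Δ
  | .app v₁ v₂, _, _, _, _, _, f, h, hf => by
      cases h with | app h1 h2 =>
        exact .app (renameTyV v₁ f h1 hf) (renameTyV v₂ f h2 hf)
  | .ret v, _, _, _, _, _, f, h, hf => by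
      cases h with | ret h1 => exact .ret (renameTyV v f h1 hf)
  | .seq c₁ c₂, _, _, _, _, _, f, h, hf => by
      cases h with | seq h1 h2 =>
        simp only [Comp.rename]
        exact .seq (renameTyC c₁ f h1 hf) (renameTyC c₂ (liftR f) h2 (liftR_ok hf))
  | .op o v, _, _, _, _, _, f, h, hf => by
      cases h with | op h1 ho => exact .op (renameTyV v f h1 hf) ho
  | .handle c h₀, _, _, _, _, _, f, h, hf => by
      cases h with | handle h1 h2 h3 =>
        simp only [Comp.rename]
        exact .handle (renameTyC c f h1 hf) (renameTyH h₀ f h2 hf)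
          (by rw [dom_rename]; exact h3)
  | .resume v₁ v₂, _, _, _, _, _, f, h, hf => by
      cases h with | resume h1 h2 =>
        exact .resume (renameTyV v₁ f h1 hf) (renameTyV v₂ f h2 hf)

theorem renameTyH : ∀ (h : Handler) {Sg : Sig} {Γ Γ' : TCtx} {S T : VTy} {Δ₁ Δ₂ : Eff} (f : ℕ → ℕ),
    HandTy Sg Γ h S Δ₁ T Δ₂ → (∀ n T', Γ[n]? = some T' → Γ'[f n]? = some T') →
    HandTy Sg Γ' (h.rename f) S Δ₁ T Δ₂
  | .retH c, _, _, _, _, _, _, _, f, h, hf => by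
      cases h with | retH h1 =>
        simp only [Handler.rename]
        exact .retH (renameTyC c (liftR f) h1 (liftR_ok hf))
  | .opH h₀ o c, _, _, _, _, _, _, _, f, h, hf => by
      cases h with | opH h1 h2 h3 h4 =>
        simp only [Handler.rename]
        exact .opH (renameTyH h₀ f h1 hf)
          (renameTyC c (liftR (liftR f)) h2 (liftR_ok (liftR_ok hf))) h3
          (by rw [dom_rename]; exact h4)
end

theorem liftS_ok {Sg : Sig} {Γ Γ' : TCtx} {σ : ℕ → Val} {S : VTy}
    (hσ : ∀ n T', Γ[n]? = some T' → ValTy Sg Γ' (σ n) T') :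
    ∀ n T', (S :: Γ)[n]? = some T' → ValTy Sg (S :: Γ') (liftS σ n) T' := by
  intro n T' h
  cases n with
  | zero =>
      simp only [liftS]
      simp only [List.getElem?_cons_zero, Option.some_inj] at h
      exact .var (by simp [h])
  | succ n =>
      simp only [liftS]
      refine renameTyV _ Nat.succ (hσ n T' (by simpa using h)) ?_
      intro m U hm; simpa using hm

mutual
theorem substTyV : ∀ (v : Val) {Sg : Sig} {Γ Γ' : TCtx} {T : VTy} (σ : ℕ → Val),
    ValTy Sg Γ v T → (∀ n T', Γ[n]? = some T' → ValTy Sg Γ' (σ n) T') →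
    ValTy Sg Γ' (v.subst σ) T
  | .var n, _, _, _, _, σ, h, hσ => by
      cases h with | var hn => exact hσ _ _ hn
  | .nat m, _, _, _, _, σ, h, hσ => by
      cases h; exact .nat
  | .lam c, _, _, _, _, σ, h, hσ => by
      cases h with | lam hc =>
        simp only [Val.subst]
        exact .lam (substTyC c (liftS σ) hc (liftS_ok hσ))
  | .kont c, _, _, _, _, σ, h, hσ => by
      cases h with | kont hc =>
        simp only [Val.subst]
        exact .kont (substTyC c (liftS σ) hc (liftS_ok hσ))

theorem substTyC : ∀ (c : Comp) {Sg : Sig} {Γ Γ' : TCtx} {T : VTy} {Δ : Eff} (σ : ℕ → Val),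
    CompTy Sg Γ c T Δ → (∀ n T', Γ[n]? = some T' → ValTy Sg Γ' (σ n) T') →
    CompTy Sg Γ' (c.subst σ) T Δ
  | .app v₁ v₂, _, _, _, _, _, σ, h, hσ => by
      cases h with | app h1 h2 =>
        exact .app (substTyV v₁ σ h1 hσ) (substTyV v₂ σ h2 hσ)
  | .ret v, _, _, _, _, _, σ, h, hσ => by
      cases h with | ret h1 => exact .ret (substTyV v σ h1 hσ)
  | .seq c₁ c₂, _, _, _, _, _, σ, h, hσ => by
      cases h with | seq h1 h2 =>
        simp only [Comp.subst]
        exact .seq (substTyC c₁ σ h1 hσ) (substTyC c₂ (liftS σ) h2 (liftS_ok hσ))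
  | .op o v, _, _, _, _, _, σ, h, hσ => by
      cases h with | op h1 ho => exact .op (substTyV v σ h1 hσ) ho
  | .handle c h₀, _, _, _, _, _, σ, h, hσ => by
      cases h with | handle h1 h2 h3 =>
        simp only [Comp.subst]
        exact .handle (substTyC c σ h1 hσ) (substTyH h₀ σ h2 hσ)
          (by rw [dom_subst]; exact h3)
  | .resume v₁ v₂, _, _, _, _, _, σ, h, hσ => by
      cases h with | resume h1 h2 =>
        exact .resume (substTyV v₁ σ h1 hσ) (substTyV v₂ σ h2 hσ)

theorem substTyH : ∀ (h : Handler) {Sg : Sig} {Γ Γ' : TCtx} {S T : VTy} {Δ₁ Δ₂ : Eff} (σ : ℕ → Val),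
    HandTy Sg Γ h S Δ₁ T Δ₂ → (∀ n T', Γ[n]? = some T' → ValTy Sg Γ' (σ n) T') →
    HandTy Sg Γ' (h.subst σ) S Δ₁ T Δ₂
  | .retH c, _, _, _, _, _, _, _, σ, h, hσ => by
      cases h with | retH h1 =>
        simp only [Handler.subst]
        exact .retH (substTyC c (liftS σ) h1 (liftS_ok hσ))
  | .opH h₀ o c, _, _, _, _, _, _, _, σ, h, hσ => by
      cases h with | opH h1 h2 h3 h4 =>
        simp only [Handler.subst]
        exact .opH (substTyH h₀ σ h1 hσ)
          (substTyC c (liftS (liftS σ)) h2 (liftS_ok (liftS_ok hσ))) h3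
          (by rw [dom_subst]; exact h4)
end

mutual
theorem monoTyV : ∀ (v : Val) {Sg : Sig} {Γ Γ' : TCtx} {T : VTy},
    ValTy Sg Γ v T → (∀ (n : ℕ) T', Γ[n]? = some T' → Γ'[n]? = some T') →
    ValTy Sg Γ' v T
  | .var n, _, _, _, _, h, hf => by
      cases h with | var hn => exact .var (hf _ _ hn)
  | .nat m, _, _, _, _, h, hf => by cases h; exact .nat
  | .lam c, _, _, _, _, h, hf => by
      cases h with | lam hc => exact .lam (monoTyC c hc (cons_ok hf))
  | .kont c, _, _, _, _, h, hf => by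
      cases h with | kont hc => exact .kont (monoTyC c hc (cons_ok hf))

theorem monoTyC : ∀ (c : Comp) {Sg : Sig} {Γ Γ' : TCtx} {T : VTy} {Δ : Eff},
    CompTy Sg Γ c T Δ → (∀ (n : ℕ) T', Γ[n]? = some T' → Γ'[n]? = some T') →
    CompTy Sg Γ' c T Δ
  | .app v₁ v₂, _, _, _, _, _, h, hf => by
      cases h with | app h1 h2 => exact .app (monoTyV v₁ h1 hf) (monoTyV v₂ h2 hf)
  | .ret v, _, _, _, _, _, h, hf => by
      cases h with | ret h1 => exact .ret (monoTyV v h1 hf)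
  | .seq c₁ c₂, _, _, _, _, _, h, hf => by
      cases h with | seq h1 h2 =>
        exact .seq (monoTyC c₁ h1 hf) (monoTyC c₂ h2 (cons_ok hf))
  | .op o v, _, _, _, _, _, h, hf => by
      cases h with | op h1 ho => exact .op (monoTyV v h1 hf) ho
  | .handle c h₀, _, _, _, _, _, h, hf => by
      cases h with | handle h1 h2 h3 =>
        exact .handle (monoTyC c h1 hf) (monoTyH h₀ h2 hf) h3
  | .resume v₁ v₂, _, _, _, _, _, h, hf => by
      cases h with | resume h1 h2 => exact .resume (monoTyV v₁ h1 hf) (monoTyV v₂ h2 hf)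

theorem monoTyH : ∀ (h : Handler) {Sg : Sig} {Γ Γ' : TCtx} {S T : VTy} {Δ₁ Δ₂ : Eff},
    HandTy Sg Γ h S Δ₁ T Δ₂ → (∀ (n : ℕ) T', Γ[n]? = some T' → Γ'[n]? = some T') →
    HandTy Sg Γ' h S Δ₁ T Δ₂
  | .retH c, _, _, _, _, _, _, _, h, hf => by
      cases h with | retH h1 => exact .retH (monoTyC c h1 (cons_ok hf))
  | .opH h₀ o c, _, _, _, _, _, _, _, h, hf => by
      cases h with | opH h1 h2 h3 h4 =>
        exact .opH (monoTyH h₀ h1 hf) (monoTyC c h2 (cons_ok (cons_ok hf))) h3 h4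
end

theorem substTy1 {Sg : Sig} {S T : VTy} {Δ : Eff} {c : Comp} {v : Val}
    (hc : CompTy Sg [S] c T Δ) (hv : ValTy Sg [] v S) :
    CompTy Sg [] (c.subst1 v) T Δ := by
  refine substTyC c _ hc ?_
  intro n T' h
  match n with
  | 0 => simp only [List.getElem?_cons_zero, Option.some_inj] at h; subst h; exact hv
  | n + 1 => simp at h

theorem substTy2 {Sg : Sig} {K X T : VTy} {Δ : Eff} {c : Comp} {vk vx : Val}
    (hc : CompTy Sg [K, X] c T Δ) (hk : ValTy Sg [] vk K) (hx : ValTy Sg [] vx X) :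
    CompTy Sg [] (c.subst2 vk vx) T Δ := by
  refine substTyC c _ hc ?_
  intro n T' h
  match n with
  | 0 => simp only [List.getElem?_cons_zero, Option.some_inj] at h; subst h; exact hk
  | 1 => simp only [List.getElem?_cons_succ, List.getElem?_cons_zero, Option.some_inj] at h
         subst h; exact hx
  | n + 2 => simp at h

theorem wkC {Sg : Sig} {Γ : TCtx} {S : VTy} {Δ : Eff} {c : Comp}
    (h : CompTy Sg [] c S Δ) : CompTy Sg Γ c S Δ :=
  monoTyC c h (by intro n T' h; simp at h)

theorem wkC1 {Sg : Sig} {Γ : TCtx} {X S : VTy} {Δ : Eff} {c : Comp}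
    (h : CompTy Sg [X] c S Δ) : CompTy Sg (X :: Γ) c S Δ := by
  refine monoTyC c h ?_
  intro n T' h
  match n with
  | 0 => simpa using h
  | n + 1 => simp at h

theorem wkH {Sg : Sig} {Γ : TCtx} {S T : VTy} {Δ₁ Δ₂ : Eff} {h : Handler}
    (hh : HandTy Sg [] h S Δ₁ T Δ₂) : HandTy Sg Γ h S Δ₁ T Δ₂ :=
  monoTyH h hh (by intro n T' h; simp at h)

/-- Typing of evaluation contexts: `E` maps a computation of type `S ! Δ`
(in the hole) to a computation of type `T ! Δ'`. -/
inductive ETy (Sg : Sig) : EvalCtx → VTy → Eff → VTy → Eff → Prop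
  | nil {S Δ} : ETy Sg [] S Δ S Δ
  | seqF {S T T' Δ Δ' c₂ E} : CompTy Sg [S] c₂ T Δ → ETy Sg E T Δ T' Δ' →
      ETy Sg (.seqF c₂ :: E) S Δ T' Δ'
  | handleF {S T T' Δ₁ Δ₂ Δ' h E} : HandTy Sg [] h S Δ₁ T Δ₂ →
      (∀ o ∈ Δ₁, o ∉ Δ₂ → o ∈ h.dom) → ETy Sg E T Δ₂ T' Δ' →
      ETy Sg (.handleF h :: E) S Δ₁ T' Δ'

/-- Typing of configurations. -/
def CfgTy (Sg : Sig) (k : Config) (T : VTy) : Prop :=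
  ∃ S Δ, CompTy Sg [] k.1 S Δ ∧ ETy Sg k.2 S Δ T ∅

theorem ETy_handled {Sg : Sig} {E : EvalCtx} {S T : VTy} {Δ Δ' : Eff}
    (h : ETy Sg E S Δ T Δ') : ∀ o ∈ Δ, o ∈ handled E ∨ o ∈ Δ' := by
  induction h with
  | nil => exact fun o ho => Or.inr ho
  | seqF hc hE ih => intro o ho; simpa [handled] using ih o ho
  | handleF hh hside hE ih =>
      intro o ho
      by_cases hd : o ∈ ‹Handler›.dom
      · exact Or.inl (by simp [handled, hd])
      · rcases ih o (by_contra fun h2 => hd (hside o ho h2)) with h | h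
        · exact Or.inl (by simp [handled, h])
        · exact Or.inr h

theorem dom_lookup : ∀ {h : Handler} {o : OpName}, o ∈ h.dom →
    ∃ c, h.lookup o = some c
  | .retH c, o, hd => by simp [Handler.dom] at hd
  | .opH h o' c, o, hd => by
      by_cases he : o' = o
      · exact ⟨c, by simp [Handler.lookup, he]⟩
      · rcases dom_lookup (h := h) (o := o)
          (by rcases (by simpa [Handler.dom] using hd) with h1 | h1
              · exact absurd h1.symm he
              · exact h1) with ⟨c', hc'⟩
        exact ⟨c', by simp [Handler.lookup, he, hc']⟩

theorem lookupTy : ∀ (h : Handler) {Sg : Sig} {Γ : TCtx} {S T : VTy} {Δ₁ Δ₂ : Eff}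
    {o : OpName} {c : Comp},
    HandTy Sg Γ h S Δ₁ T Δ₂ → h.lookup o = some c →
    CompTy Sg (VTy.cont (Sg.res o) Δ₂ T :: Sg.arg o :: Γ) c T Δ₂
  | .retH c0, _, _, _, _, _, _, _, _, hh, hl => by simp [Handler.lookup] at hl
  | .opH h0 o' c0, Sg, Γ, S, T, Δ₁, Δ₂, o, c, hh, hl => by
      cases hh with
      | opH h1 h2 h3 h4 =>
          by_cases he : o' = o
          · subst he
            simp [Handler.lookup] at hl
            subst hl; exact h2
          · exact lookupTy h0 h1 (by simpa [Handler.lookup, he] using hl)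

theorem retClauseTy : ∀ (h : Handler) {Sg : Sig} {Γ : TCtx} {S T : VTy} {Δ₁ Δ₂ : Eff},
    HandTy Sg Γ h S Δ₁ T Δ₂ → CompTy Sg (S :: Γ) h.retClause T Δ₂
  | .retH c0, _, _, _, _, _, _, hh => by
      cases hh with | retH h1 => exact h1
  | .opH h0 o' c0, _, _, _, _, _, _, hh => by
      cases hh with | opH h1 h2 h3 h4 =>
        simp only [Handler.retClause]
        exact retClauseTy h0 h1

theorem handled_decomp {E : EvalCtx} {o : OpName} (h : o ∈ handled E) :
    ∃ E₂ hd E₁, E = E₂ ++ .handleF hd :: E₁ ∧ o ∉ handled E₂ ∧ o ∈ hd.dom := by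
  induction E with
  | nil => simp [handled] at h
  | cons F E ih =>
      cases F with
      | seqF c₂ =>
          rcases ih (by simpa [handled] using h) with ⟨E₂, hd, E₁, rfl, h1, h2⟩
          exact ⟨.seqF c₂ :: E₂, hd, E₁, rfl, by simpa [handled] using h1, h2⟩
      | handleF hh =>
          by_cases hd : o ∈ hh.dom
          · exact ⟨[], hh, E, rfl, by simp [handled], hd⟩
          · rcases ih (by rcases (by simpa [handled] using h) with h1 | h1
                          · exact h1
                          · exact absurd h1 hd) with ⟨E₂, hd', E₁, rfl, h1, h2⟩
            exact ⟨.handleF hh :: E₂, hd', E₁, rfl, by simp [handled, h1, hd], h2⟩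

theorem ETy_append {Sg : Sig} {E₂ E₁ : EvalCtx} {S T : VTy} {Δ Δ' : Eff}
    (h : ETy Sg (E₂ ++ E₁) S Δ T Δ') :
    ∃ M ΔM, ETy Sg E₂ S Δ M ΔM ∧ ETy Sg E₁ M ΔM T Δ' := by
  induction E₂ generalizing S Δ with
  | nil => exact ⟨S, Δ, .nil, h⟩
  | cons F E ih =>
      cases F with
      | seqF c₂ =>
          cases h with
          | seqF h1 h2 =>
              rcases ih h2 with ⟨M, ΔM, hA, hB⟩
              exact ⟨M, ΔM, .seqF h1 hA, hB⟩
      | handleF hh =>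
          cases h with
          | handleF h1 h2 h3 =>
              rcases ih h3 with ⟨M, ΔM, hA, hB⟩
              exact ⟨M, ΔM, .handleF h1 h2 hA, hB⟩

theorem plugTy {Sg : Sig} {E : EvalCtx} {S M : VTy} {Δ ΔM : Eff}
    (hE : ETy Sg E S Δ M ΔM) : ∀ {Γ c}, CompTy Sg Γ c S Δ →
    CompTy Sg Γ (plug E c) M ΔM := by
  induction hE with
  | nil => exact fun h => h
  | seqF h1 h2 ih =>
      intro Γ c hc
      exact ih (.seq hc (wkC1 h1))
  | handleF h1 h2 h3 ih =>
      intro Γ c hc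
      exact ih (.handle hc (wkH h1) h2)

theorem preservation {Sg : Sig} {k k' : Config} {T : VTy}
    (hk : CfgTy Sg k T) (hs : Step k k') : CfgTy Sg k' T := by
  obtain ⟨S, Δ, hc, hE⟩ := hk
  cases hs with
  | app =>
      cases hc with | app h1 h2 =>
        cases h1 with | lam hbody =>
          exact ⟨S, Δ, substTy1 hbody h2, hE⟩
  | seq =>
      cases hc with | seq h1 h2 =>
        cases h1 with | ret hv =>
          exact ⟨S, Δ, substTy1 h2 hv, hE⟩
  | hdl =>
      cases hc with | handle h1 h2 h3 =>
        cases h1 with | ret hv =>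
          exact ⟨S, Δ, substTy1 (retClauseTy _ h2) hv, hE⟩
  | push F c E =>
      cases F with
      | seqF c₂ =>
          cases hc with | seq h1 h2 =>
            exact ⟨_, Δ, h1, .seqF h2 hE⟩
      | handleF h =>
          cases hc with | handle h1 h2 h3 =>
            exact ⟨_, _, h1, .handleF h2 h3 hE⟩
  | pop F v E =>
      cases F with
      | seqF c₂ =>
          cases hE with | seqF h1 h2 =>
            cases hc with | ret hv =>
              exact ⟨_, _, .seq (.ret hv) h1, h2⟩
      | handleF h =>
          cases hE with | handleF h1 h2 h3 =>
            cases hc with | ret hv =>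
              exact ⟨_, _, .handle (.ret hv) h1 h2, h3⟩
  | @op h o v cl E₁ E₂ hlook hnh =>
      cases hc with | op hv ho =>
        rcases ETy_append hE with ⟨M, ΔM, hE₂, hmid⟩
        cases hmid with | handleF hh hside hE₁ =>
          have hvar : CompTy Sg [Sg.res o] (.ret (.var 0)) (Sg.res o) Δ :=
            .ret (.var (by simp))
          have hK : CompTy Sg [Sg.res o]
              (.handle (plug E₂ (.ret (.var 0))) _) _ _ :=
            .handle (plugTy hE₂ hvar) (wkH hh) hside
          have hkont := ValTy.kont (Sg := Sg) (Γ := []) hK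
          have hclause := lookupTy _ hh hlook
          exact ⟨_, _, substTy2 hclause hkont hv, hE₁⟩
  | resume =>
      cases hc with | resume h1 h2 =>
        cases h1 with | kont hbody =>
          exact ⟨S, Δ, substTy1 hbody h2, hE⟩

theorem steps_preservation {Sg : Sig} {k k' : Config} {T : VTy}
    (hk : CfgTy Sg k T) (hs : Steps k k') : CfgTy Sg k' T := by
  induction hs with
  | refl => exact hk
  | tail _ h ih => exact preservation ih h

theorem progress {Sg : Sig} {k : Config} {T : VTy} (hk : CfgTy Sg k T) :
    (∃ v, k = (.ret v, ([] : EvalCtx))) ∨ ∃ k', Step k k' := by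
  obtain ⟨c, E⟩ := k
  obtain ⟨S, Δ, hc, hE⟩ := hk
  cases hc with
  | app h1 h2 =>
      cases h1 with
      | var hn => simp at hn
      | lam hbody => exact Or.inr ⟨_, .app⟩
  | resume h1 h2 =>
      cases h1 with
      | var hn => simp at hn
      | kont hbody => exact Or.inr ⟨_, .resume⟩
  | ret hv =>
      cases E with
      | nil => exact Or.inl ⟨_, rfl⟩
      | cons F E => exact Or.inr ⟨_, .pop F _ E⟩
  | seq h1 h2 => exact Or.inr ⟨_, .push (.seqF _) _ E⟩
  | op hv ho =>
      rename_i o _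
      have hh : o ∈ handled E := by
        rcases ETy_handled hE o ho with h | h
        · exact h
        · simp at h
      rcases handled_decomp hh with ⟨E₂, hd, E₁, rfl, h1, h2⟩
      rcases dom_lookup h2 with ⟨c', hc'⟩
      exact Or.inr ⟨_, .op E₁ E₂ hc' h1⟩
  | handle h1 h2 h3 => exact Or.inr ⟨_, .push (.handleF _) _ E⟩

/-- **Type safety for λ_op** (Corollary B.3): if `⊢ c : T ! ∅` (a closed
computation well-typed with the empty effect set), then either evaluation of
`⟨c; [-]⟩` diverges, or `⟨c; [-]⟩ →* ⟨return v; [-]⟩` for some value `v`. -/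
theorem type_safety (Sg : Sig) (c : Comp) (T : VTy)
    (hty : CompTy Sg [] c T ∅) :
    Diverges (c, ([] : EvalCtx)) ∨
    (∃ v : Val, Steps (c, ([] : EvalCtx)) (.ret v, ([] : EvalCtx))) := by
  by_contra hcon
  push_neg at hcon
  obtain ⟨hdiv, hret⟩ := hcon
  set k0 : Config := (c, ([] : EvalCtx)) with hk0
  have hk0ty : CfgTy Sg k0 T := ⟨T, ∅, hty, .nil⟩
  have key : ∀ k, Steps k0 k → ∃ k', Step k k' := by
    intro k hk
    rcases progress (steps_preservation hk0ty hk) with ⟨v, rfl⟩ | h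
    · exact absurd hk (hret v)
    · exact h
  let next : {k : Config // Steps k0 k} → {k : Config // Steps k0 k} :=
    fun p => ⟨(key p.1 p.2).choose, p.2.tail (key p.1 p.2).choose_spec⟩
  let f : ℕ → {k : Config // Steps k0 k} := fun n => next^[n] ⟨k0, .refl⟩
  refine hdiv ⟨fun n => (f n).1, rfl, fun n => ?_⟩
  have hstep : f (n + 1) = next (f n) := Function.iterate_succ_apply' next n _
  show Step (f n).1 (f (n + 1)).1
  rw [hstep]
  exact (key (f n).1 (f n).2).choose_spec

end EffLang
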